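/- arXiv:2303.06651 — 8 statements merged into one kernel-verified Lean document; each statement's English description precedes it below -/
import Mathlib

section
/- Let a ∈ R have a WD inverse x with index k and a Moore-Penrose inverse a†. Then y = x·a·a† satisfies: yay = y, ay = aa†, and y·a^k = x·a^k. -/
section InnerInverse

variable {M : Type*} [Monoid M] {a x y : M}

theorem mul_mul_mul_eq_mul_of_mul_mul_eq {ad : M} (hmp : a * ad * a = a) (x : M) :
    x * a * ad * a = x * a := by
  rw [mul_assoc x a ad, mul_assoc x (a * ad) a, hmp]

theorem isIdempotentElem_mul_of_mul_mul_eq (h : a * x * a = a) : IsIdempotentElem (x * a) := by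
  rw [IsIdempotentElem, mul_assoc x a, ← mul_assoc a, h]

theorem mul_pow_eq_of_mul_eq (hya : y * a = x * a) {k : ℕ} (hk : 0 < k) :
    y * a ^ k = x * a ^ k := by
  obtain ⟨m, rfl⟩ : ∃ m, k = m + 1 := ⟨k - 1, (Nat.succ_pred_eq_of_pos hk).symm⟩
  rw [pow_succ', ← mul_assoc, ← mul_assoc, hya]

end InnerInverse

theorem WDMP_candidate_solution_general {R : Type*} [Ring R] (a x ad : R) (k : ℕ) (hk : 0 < k)
    (hmp1 : a * ad * a = a)
    (h1 : a * x * a = a) :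
    x * a * ad * a * (x * a * ad) = x * a * ad ∧
    a * (x * a * ad) = a * ad ∧
    x * a * ad * a ^ k = x * a ^ k := by
  have hya : x * a * ad * a = x * a := mul_mul_mul_eq_mul_of_mul_mul_eq hmp1 x
  refine ⟨?_, ?_, mul_pow_eq_of_mul_eq hya hk⟩
  · rw [hya, ← mul_assoc, (isIdempotentElem_mul_of_mul_mul_eq h1).eq]
  · rw [← mul_assoc, ← mul_assoc, h1]

theorem WDMP_candidate_solution {R : Type*} [Ring R] [StarRing R] (a x ad : R) (k : ℕ) (hk : 0 < k)
    (hmp1 : a * ad * a = a) (hmp2 : ad * a * ad = ad)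
    (hmp3 : star (a * ad) = a * ad) (hmp4 : star (ad * a) = ad * a)
    (h1 : a * x * a = a) (h2 : a ^ (k + 1) * x = a ^ k) (h3 : x * a ^ (k + 1) = a ^ k) :
    x * a * ad * a * (x * a * ad) = x * a * ad ∧
    a * (x * a * ad) = a * ad ∧
    x * a * ad * a ^ k = x * a ^ k :=
  WDMP_candidate_solution_general a x ad k hk hmp1 h1
end

section
/- Let y be a WDMP inverse of a with index k. Then y·a^{k+1}·y = a^k·a†. -/
theorem WDMP_y_pow_y_general {R : Type*} [Ring R] (a x ad y : R) (k : ℕ)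
    (h3 : x * a ^ (k + 1) = a ^ k)
    (hy2 : a * y = a * ad) (hy3 : y * a ^ k = x * a ^ k) :
    y * a ^ (k + 1) * y = a ^ k * ad :=
  calc y * a ^ (k + 1) * y = y * a ^ k * (a * y) := by simp only [pow_succ, mul_assoc]
    _ = x * a ^ k * (a * ad) := by rw [hy3, hy2]
    _ = x * a ^ (k + 1) * ad := by simp only [pow_succ, mul_assoc]
    _ = a ^ k * ad := by rw [h3]

theorem WDMP_y_pow_y {R : Type*} [Ring R] [StarRing R] (a x ad y : R) (k : ℕ) (hk : 0 < k)
    (hmp1 : a * ad * a = a) (hmp2 : ad * a * ad = ad)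
    (hmp3 : star (a * ad) = a * ad) (hmp4 : star (ad * a) = ad * a)
    (h1 : a * x * a = a) (h2 : a ^ (k + 1) * x = a ^ k) (h3 : x * a ^ (k + 1) = a ^ k)
    (hy1 : y * a * y = y) (hy2 : a * y = a * ad) (hy3 : y * a ^ k = x * a ^ k) :
    y * a ^ (k + 1) * y = a ^ k * ad :=
  WDMP_y_pow_y_general a x ad y k h3 hy2 hy3
end

section
/- Let a ∈ R be Hermitian (a* = a) with Moore-Penrose inverse a†, WD inverse x of index k, and WDMP inverse y. Then a²y = a. -/
theorem IsSelfAdjoint.mul_self_mul_eq_self {R : Type*} [Monoid R] [StarMul R] {a b : R}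
    (ha : IsSelfAdjoint a) (hab : IsSelfAdjoint (a * b)) (h : a * b * a = a) :
    a * a * b = a :=
  calc a * a * b = star (a * b * a) := by rw [star_mul, ha.star_eq, hab.star_eq, mul_assoc]
    _ = a := by rw [h, ha.star_eq]

theorem WDMP_hermitian_a2y_general {R : Type*} [Ring R] [StarRing R] (a ad y : R)
    (hmp1 : a * ad * a = a)
    (hmp3 : star (a * ad) = a * ad)
    (hy2 : a * y = a * ad) (ha : star a = a) :
    a ^ 2 * y = a := by
  rw [sq, mul_assoc, hy2, ← mul_assoc]
  exact IsSelfAdjoint.mul_self_mul_eq_self ha hmp3 hmp1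

theorem WDMP_hermitian_a2y {R : Type*} [Ring R] [StarRing R] (a x ad y : R) (k : ℕ) (hk : 0 < k)
    (hmp1 : a * ad * a = a) (hmp2 : ad * a * ad = ad)
    (hmp3 : star (a * ad) = a * ad) (hmp4 : star (ad * a) = ad * a)
    (h1 : a * x * a = a) (h2 : a ^ (k + 1) * x = a ^ k) (h3 : x * a ^ (k + 1) = a ^ k)
    (hy1 : y * a * y = y) (hy2 : a * y = a * ad) (hy3 : y * a ^ k = x * a ^ k) (ha : star a = a) :
    a ^ 2 * y = a :=
  WDMP_hermitian_a2y_general a ad y hmp1 hmp3 hy2 ha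
end

section
/- Let a, b ∈ R have WD inverses a', b' respectively with common index k. If ab = ba = 0, ab' = b'a = 0, and a'b = ba' = 0, then a' + b' is a WD inverse of a + b with index k. -/
/-! When `a` and `b` annihilate each other and each other's inverses, every cross term in a product
of `a + b` and `a' + b'` vanishes. In particular `(a + b) ^ n = a ^ n + b ^ n` for `n ≥ 1`, so each
defining identity for `a + b` is the sum of the corresponding identities for `a` and for `b`. -/

section

variable {R : Type*} [Ring R]

structure IsWDInverse (a x : R) (k : ℕ) : Prop where
  mul_mul_self : a * x * a = a
  pow_succ_mul : a ^ (k + 1) * x = a ^ k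
  mul_pow_succ : x * a ^ (k + 1) = a ^ k

theorem pow_succ_mul_eq_zero {a c : R} (h : a * c = 0) (n : ℕ) : a ^ (n + 1) * c = 0 := by
  rw [pow_succ, mul_assoc, h, mul_zero]

theorem mul_pow_succ_eq_zero {a c : R} (h : c * a = 0) (n : ℕ) : c * a ^ (n + 1) = 0 := by
  rw [pow_succ', ← mul_assoc, h, zero_mul]

theorem add_pow_succ_of_mul_eq_zero {a b : R} (hab : a * b = 0) (hba : b * a = 0) (n : ℕ) :
    (a + b) ^ (n + 1) = a ^ (n + 1) + b ^ (n + 1) := by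
  induction n with
  | zero => simp
  | succ n ih =>
    rw [pow_succ, ih, add_mul, mul_add, mul_add, pow_succ_mul_eq_zero hab,
      pow_succ_mul_eq_zero hba, ← pow_succ, ← pow_succ, add_zero, zero_add]

theorem IsWDInverse.add {a b a' b' : R} {k : ℕ} (hk : 0 < k)
    (ha : IsWDInverse a a' k) (hb : IsWDInverse b b' k)
    (hab : a * b = 0) (hba : b * a = 0) (hab' : a * b' = 0) (hb'a : b' * a = 0)
    (ha'b : a' * b = 0) (hba' : b * a' = 0) :
    IsWDInverse (a + b) (a' + b') k := by
  obtain ⟨j, rfl⟩ := Nat.exists_eq_add_one.mpr hk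
  have hpow (n : ℕ) := add_pow_succ_of_mul_eq_zero hab hba n
  constructor
  · calc (a + b) * (a' + b') * (a + b)
        = a * a' * a + a * (a' * b) + a * b' * (a + b) + b * a' * (a + b)
          + b * (b' * a) + b * b' * b := by noncomm_ring
      _ = a + b := by
        rw [ha.mul_mul_self, hb.mul_mul_self, ha'b, hab', hba', hb'a]
        simp
  · rw [hpow, hpow, add_mul, mul_add, mul_add, pow_succ_mul_eq_zero hab',
      pow_succ_mul_eq_zero hba', ha.pow_succ_mul, hb.pow_succ_mul]
    simp only [add_zero, zero_add]
  · rw [hpow, hpow, mul_add, add_mul, add_mul, mul_pow_succ_eq_zero hb'a,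
      mul_pow_succ_eq_zero ha'b, ha.mul_pow_succ, hb.mul_pow_succ]
    simp only [add_zero, zero_add]

end

theorem WD_additive {R : Type*} [Ring R] (a b a' b' : R) (k : ℕ) (hk : 0 < k)
    (ha1 : a * a' * a = a) (ha2 : a ^ (k + 1) * a' = a ^ k) (ha3 : a' * a ^ (k + 1) = a ^ k)
    (hb1 : b * b' * b = b) (hb2 : b ^ (k + 1) * b' = b ^ k) (hb3 : b' * b ^ (k + 1) = b ^ k)
    (hab : a * b = 0) (hba : b * a = 0) (hab2 : a * b' = 0) (hb2a : b' * a = 0) (ha2b : a' * b = 0) (hba2 : b * a' = 0) :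
    (a + b) * (a' + b') * (a + b) = a + b ∧ (a + b) ^ (k + 1) * (a' + b') = (a + b) ^ k ∧ (a' + b') * (a + b) ^ (k + 1) = (a + b) ^ k := by
  have h := IsWDInverse.add hk ⟨ha1, ha2, ha3⟩ ⟨hb1, hb2, hb3⟩ hab hba hab2 hb2a ha2b hba2
  exact ⟨h.mul_mul_self, h.pow_succ_mul, h.mul_pow_succ⟩
end

section
/- Let a, b ∈ R have WD inverses a', b' respectively with common index k. If ab = ba and bb'a' = a'bb', then b'a' is a WD inverse of ab with index k. -/
structure IsWDInverse_s15 {M : Type*} [Monoid M] (a x : M) (k : ℕ) : Prop where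
  mul_mul_self : a * x * a = a
  pow_succ_mul : a ^ (k + 1) * x = a ^ k
  mul_pow_succ : x * a ^ (k + 1) = a ^ k

section

variable {M : Type*} [Monoid M] {a b a' b' : M}

theorem mul_rev_inner_inverse (ha : a * a' * a = a) (hb : b * b' * b = b) (hab : Commute a b)
    (hc : b * b' * a' = a' * (b * b')) : a * b * (b' * a') * (a * b) = a * b := by
  have hbb' : b * b' * (a * b) = a * b := by
    rw [hab.eq, ← mul_assoc, hb]
  calc a * b * (b' * a') * (a * b)
      = a * (b * b' * a') * (a * b) := by simp only [mul_assoc]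
    _ = a * a' * (b * b' * (a * b)) := by rw [hc]; simp only [mul_assoc]
    _ = a * b := by rw [hbb', ← mul_assoc, ha]

theorem Commute.pow_succ_mul_rev {n : ℕ} (hab : Commute a b) (ha : a ^ (n + 1) * a' = a ^ n)
    (hb : b ^ (n + 1) * b' = b ^ n) : (a * b) ^ (n + 1) * (b' * a') = (a * b) ^ n := by
  calc (a * b) ^ (n + 1) * (b' * a')
      = a ^ (n + 1) * (b ^ (n + 1) * b') * a' := by rw [hab.mul_pow]; simp only [mul_assoc]
    _ = b ^ n * (a ^ (n + 1) * a') := by rw [hb, (hab.pow_pow _ _).eq, mul_assoc]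
    _ = (a * b) ^ n := by rw [ha, ← (hab.pow_pow _ _).eq, hab.mul_pow]

theorem Commute.rev_mul_pow_succ {n : ℕ} (hab : Commute a b) (ha : a' * a ^ (n + 1) = a ^ n)
    (hb : b' * b ^ (n + 1) = b ^ n) : b' * a' * (a * b) ^ (n + 1) = (a * b) ^ n := by
  calc b' * a' * (a * b) ^ (n + 1)
      = b' * ((a' * a ^ (n + 1)) * b ^ (n + 1)) := by rw [hab.mul_pow]; simp only [mul_assoc]
    _ = (b' * b ^ (n + 1)) * a ^ n := by rw [ha, (hab.pow_pow _ _).eq, mul_assoc]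
    _ = (a * b) ^ n := by rw [hb, ← (hab.pow_pow _ _).eq, hab.mul_pow]

theorem IsWDInverse_s15.mul_rev {k : ℕ} (ha : IsWDInverse_s15 a a' k) (hb : IsWDInverse_s15 b b' k)
    (hab : Commute a b) (hc : b * b' * a' = a' * (b * b')) : IsWDInverse_s15 (a * b) (b' * a') k where
  mul_mul_self := mul_rev_inner_inverse ha.mul_mul_self hb.mul_mul_self hab hc
  pow_succ_mul := hab.pow_succ_mul_rev ha.pow_succ_mul hb.pow_succ_mul
  mul_pow_succ := hab.rev_mul_pow_succ ha.mul_pow_succ hb.mul_pow_succ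

end

theorem WD_reverse_order_general {R : Type*} [Ring R] (a b a' b' : R) (k : ℕ)
    (ha1 : a * a' * a = a) (ha2 : a ^ (k + 1) * a' = a ^ k) (ha3 : a' * a ^ (k + 1) = a ^ k)
    (hb1 : b * b' * b = b) (hb2 : b ^ (k + 1) * b' = b ^ k) (hb3 : b' * b ^ (k + 1) = b ^ k)
    (hcomm : a * b = b * a) (hc : b * b' * a' = a' * (b * b')) :
    a * b * (b' * a') * (a * b) = a * b ∧ (a * b) ^ (k + 1) * (b' * a') = (a * b) ^ k ∧ (b' * a') * (a * b) ^ (k + 1) = (a * b) ^ k := by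
  have h := IsWDInverse_s15.mul_rev ⟨ha1, ha2, ha3⟩ ⟨hb1, hb2, hb3⟩ hcomm hc
  exact ⟨h.mul_mul_self, h.pow_succ_mul, h.mul_pow_succ⟩

theorem WD_reverse_order {R : Type*} [Ring R] (a b a' b' : R) (k : ℕ) (hk : 0 < k)
    (ha1 : a * a' * a = a) (ha2 : a ^ (k + 1) * a' = a ^ k) (ha3 : a' * a ^ (k + 1) = a ^ k)
    (hb1 : b * b' * b = b) (hb2 : b ^ (k + 1) * b' = b ^ k) (hb3 : b' * b ^ (k + 1) = b ^ k)
    (hcomm : a * b = b * a) (hc : b * b' * a' = a' * (b * b')) :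
    a * b * (b' * a') * (a * b) = a * b ∧ (a * b) ^ (k + 1) * (b' * a') = (a * b) ^ k ∧ (b' * a') * (a * b) ^ (k + 1) = (a * b) ^ k :=
  WD_reverse_order_general a b a' b' k ha1 ha2 ha3 hb1 hb2 hb3 hcomm hc
end

section
/- Let a, b ∈ R have WD inverses a', b' respectively with common index k. If ab = ba and ba'a = a'ab, then b'a' is a WD inverse of ab with index k. -/
structure IsWDInverse_s16 {M : Type*} [Monoid M] (a x : M) (k : ℕ) : Prop where
  mul_mul_self : a * x * a = a
  pow_succ_mul : a ^ (k + 1) * x = a ^ k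
  mul_pow_succ : x * a ^ (k + 1) = a ^ k

section Monoid

variable {M : Type*} [Monoid M] {a b a' b' : M}

theorem mul_mul_reverse_mul_self (ha : a * a' * a = a) (hb : b * b' * b = b)
    (hc : Commute b (a' * a)) : a * b * (b' * a') * (a * b) = a * b :=
  calc a * b * (b' * a') * (a * b)
      = a * (b * b') * (a' * a * b) := by simp only [mul_assoc]
    _ = a * (b * b' * b) * (a' * a) := by rw [← hc.eq]; simp only [mul_assoc]
    _ = a * (a' * a * b) := by rw [hb, mul_assoc, hc.eq]
    _ = a * b := by rw [← mul_assoc, ← mul_assoc, ha]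

theorem pow_succ_mul_reverse {k : ℕ} (hab : Commute a b) (ha : a ^ (k + 1) * a' = a ^ k)
    (hb : b ^ (k + 1) * b' = b ^ k) : (a * b) ^ (k + 1) * (b' * a') = (a * b) ^ k :=
  calc (a * b) ^ (k + 1) * (b' * a')
      = a ^ (k + 1) * (b ^ (k + 1) * b') * a' := by rw [hab.mul_pow]; simp only [mul_assoc]
    _ = b ^ k * (a ^ (k + 1) * a') := by
      rw [hb, (hab.pow_pow (k + 1) k).eq]; simp only [mul_assoc]
    _ = (a * b) ^ k := by rw [ha, hab.mul_pow, (hab.pow_pow k k).eq]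

theorem reverse_mul_pow_succ {k : ℕ} (hab : Commute a b) (ha : a' * a ^ (k + 1) = a ^ k)
    (hb : b' * b ^ (k + 1) = b ^ k) : b' * a' * (a * b) ^ (k + 1) = (a * b) ^ k :=
  calc b' * a' * (a * b) ^ (k + 1)
      = b' * (a' * a ^ (k + 1)) * b ^ (k + 1) := by rw [hab.mul_pow]; simp only [mul_assoc]
    _ = b' * b ^ (k + 1) * a ^ k := by
      rw [ha, mul_assoc, (hab.pow_pow k (k + 1)).eq, mul_assoc]
    _ = (a * b) ^ k := by rw [hb, hab.mul_pow, (hab.pow_pow k k).eq]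

theorem IsWDInverse_s16.mul {k : ℕ} (ha : IsWDInverse_s16 a a' k) (hb : IsWDInverse_s16 b b' k)
    (hab : Commute a b) (hc : Commute b (a' * a)) : IsWDInverse_s16 (a * b) (b' * a') k where
  mul_mul_self := mul_mul_reverse_mul_self ha.mul_mul_self hb.mul_mul_self hc
  pow_succ_mul := pow_succ_mul_reverse hab ha.pow_succ_mul hb.pow_succ_mul
  mul_pow_succ := reverse_mul_pow_succ hab ha.mul_pow_succ hb.mul_pow_succ

end Monoid

theorem WD_reverse_order2_general {R : Type*} [Ring R] (a b a' b' : R) (k : ℕ)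
    (ha1 : a * a' * a = a) (ha2 : a ^ (k + 1) * a' = a ^ k) (ha3 : a' * a ^ (k + 1) = a ^ k)
    (hb1 : b * b' * b = b) (hb2 : b ^ (k + 1) * b' = b ^ k) (hb3 : b' * b ^ (k + 1) = b ^ k)
    (hcomm : a * b = b * a) (hc : b * (a' * a) = a' * a * b) :
    a * b * (b' * a') * (a * b) = a * b ∧ (a * b) ^ (k + 1) * (b' * a') = (a * b) ^ k ∧ (b' * a') * (a * b) ^ (k + 1) = (a * b) ^ k := by
  have h := (IsWDInverse_s16.mk ha1 ha2 ha3).mul ⟨hb1, hb2, hb3⟩ hcomm hc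
  exact ⟨h.mul_mul_self, h.pow_succ_mul, h.mul_pow_succ⟩

theorem WD_reverse_order2 {R : Type*} [Ring R] (a b a' b' : R) (k : ℕ) (hk : 0 < k)
    (ha1 : a * a' * a = a) (ha2 : a ^ (k + 1) * a' = a ^ k) (ha3 : a' * a ^ (k + 1) = a ^ k)
    (hb1 : b * b' * b = b) (hb2 : b ^ (k + 1) * b' = b ^ k) (hb3 : b' * b ^ (k + 1) = b ^ k)
    (hcomm : a * b = b * a) (hc : b * (a' * a) = a' * a * b) :
    a * b * (b' * a') * (a * b) = a * b ∧ (a * b) ^ (k + 1) * (b' * a') = (a * b) ^ k ∧ (b' * a') * (a * b) ^ (k + 1) = (a * b) ^ k :=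
  WD_reverse_order2_general a b a' b' k ha1 ha2 ha3 hb1 hb2 hb3 hcomm hc
end

section
/- Let a, b ∈ R have WD inverses a', b' respectively with common index k. If a'(a+b)b' = a' + b', then aa'bb' = aa', a'ab'b = b'b, a^k bb' = a^k, and a'a b^k = b^k. -/
/-! Multiplying the absorption law `a' (a + b) b' = a' + b'` by `a` on the left, the inner
inverse identity `a a' a = a` turns `a a' a b'` into `a b'`, which cancels and leaves
`a a' b b' = a a'`; symmetrically, multiplying by `b` on the right gives `a' a b' b = b' b`.
Multiplying these by `a ^ k` on the left (resp. `b ^ k` on the right) and absorbing with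
`a ^ (k + 1) a' = a ^ k` (resp. `b' b ^ (k + 1) = b ^ k`) gives the two power identities. -/

section Absorption

variable {R : Type*} [Ring R] {a b a' b' : R}

theorem mul_mul_mul_eq_of_absorption (ha : a * a' * a = a)
    (habs : a' * (a + b) * b' = a' + b') : a * a' * (b * b') = a * a' :=
  calc a * a' * (b * b')
      = a * (a' * (a + b) * b') - (a * a' * a) * b' := by noncomm_ring
    _ = a * (a' + b') - a * b' := by rw [habs, ha]
    _ = a * a' := by noncomm_ring

theorem mul_mul_mul_eq_of_absorption' (hb : b * b' * b = b)
    (habs : a' * (a + b) * b' = a' + b') : a' * a * (b' * b) = b' * b :=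
  calc a' * a * (b' * b)
      = (a' * (a + b) * b') * b - a' * (b * b' * b) := by noncomm_ring
    _ = (a' + b') * b - a' * b := by rw [habs, hb]
    _ = b' * b := by noncomm_ring

end Absorption

section PowerAbsorption

variable {M : Type*} [Monoid M] {a a' x : M} {k : ℕ}

theorem pow_mul_eq_self_of_mul_mul_eq (ha : a ^ (k + 1) * a' = a ^ k)
    (hx : a * a' * x = a * a') : a ^ k * x = a ^ k :=
  calc a ^ k * x
      = a ^ (k + 1) * a' * x := by rw [ha]
    _ = a ^ k * (a * a' * x) := by simp only [pow_succ, mul_assoc]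
    _ = a ^ (k + 1) * a' := by rw [hx, pow_succ, mul_assoc]
    _ = a ^ k := ha

theorem mul_pow_eq_self_of_mul_mul_eq (ha : a' * a ^ (k + 1) = a ^ k)
    (hx : x * (a' * a) = a' * a) : x * a ^ k = a ^ k :=
  calc x * a ^ k
      = x * (a' * a ^ (k + 1)) := by rw [ha]
    _ = x * (a' * a) * a ^ k := by simp only [pow_succ', mul_assoc]
    _ = a' * a ^ (k + 1) := by rw [hx, pow_succ', mul_assoc]
    _ = a ^ k := ha

end PowerAbsorption

theorem WD_absorption_general {R : Type*} [Ring R] (a b a' b' : R) (k : ℕ)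
    (ha1 : a * a' * a = a) (ha2 : a ^ (k + 1) * a' = a ^ k)
    (hb1 : b * b' * b = b) (hb3 : b' * b ^ (k + 1) = b ^ k)
    (habs : a' * (a + b) * b' = a' + b') :
    a * a' * (b * b') = a * a' ∧ a' * a * (b' * b) = b' * b ∧ a ^ k * (b * b') = a ^ k ∧ a' * a * b ^ k = b ^ k := by
  have hbb := mul_mul_mul_eq_of_absorption ha1 habs
  have haa := mul_mul_mul_eq_of_absorption' hb1 habs
  exact ⟨hbb, haa, pow_mul_eq_self_of_mul_mul_eq ha2 hbb,
    mul_pow_eq_self_of_mul_mul_eq hb3 haa⟩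

theorem WD_absorption {R : Type*} [Ring R] (a b a' b' : R) (k : ℕ) (hk : 0 < k)
    (ha1 : a * a' * a = a) (ha2 : a ^ (k + 1) * a' = a ^ k) (ha3 : a' * a ^ (k + 1) = a ^ k)
    (hb1 : b * b' * b = b) (hb2 : b ^ (k + 1) * b' = b ^ k) (hb3 : b' * b ^ (k + 1) = b ^ k)
    (habs : a' * (a + b) * b' = a' + b') :
    a * a' * (b * b') = a * a' ∧ a' * a * (b' * b) = b' * b ∧ a ^ k * (b * b') = a ^ k ∧ a' * a * b ^ k = b ^ k :=
  WD_absorption_general a b a' b' k ha1 ha2 hb1 hb3 habs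
end

section
/- Let a, b ∈ R have WD inverses a', b' with common index k. If b'aa' = a' and b'ba' = b', then b'(a+b)a' = a' + b'; moreover b^k aa' = b^k, b'b a^k = a^k, bb'aa' = bb', and b'ba'a = a'a. -/
/-! Everything follows from the two absorption identities by reassociating: `b' * a = a' * a`
(insert `a = a * a' * a` and absorb `b' * (a * a') = a'`) and `b * b' = b * a'` (insert
`b' = b' * b * a'` and use `b * b' * b = b`). -/

section Semigroup

variable {S : Type*} [Semigroup S] {a b a' b' : S}

theorem mul_eq_mul_of_mul_mul_eq (ha : a * a' * a = a) (h : b' * (a * a') = a') :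
    b' * a = a' * a := by
  calc b' * a = b' * (a * a' * a) := by rw [ha]
    _ = b' * (a * a') * a := by simp only [mul_assoc]
    _ = a' * a := by rw [h]

theorem mul_eq_mul_of_mul_mul_mul_eq (hb : b * b' * b = b) (h : b' * b * a' = b') :
    b * b' = b * a' := by
  calc b * b' = b * (b' * b * a') := by rw [h]
    _ = b * b' * b * a' := by simp only [mul_assoc]
    _ = b * a' := by rw [hb]

end Semigroup

section Monoid

variable {M : Type*} [Monoid M] {a b a' b' : M} {k : ℕ}

theorem pow_succ_mul_eq_pow_of_mul_mul_eq (hb : b ^ (k + 1) * b' = b ^ k)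
    (h : b' * b * a' = b') : b ^ (k + 1) * a' = b ^ k := by
  calc b ^ (k + 1) * a' = b ^ (k + 1) * b' * b * a' := by rw [hb, ← pow_succ]
    _ = b ^ (k + 1) * (b' * b * a') := by simp only [mul_assoc]
    _ = b ^ k := by rw [h, hb]

end Monoid

theorem WD_absorption2_general {R : Type*} [Ring R] (a b a' b' : R) (k : ℕ)
    (ha1 : a * a' * a = a) (ha3 : a' * a ^ (k + 1) = a ^ k)
    (hb1 : b * b' * b = b) (hb2 : b ^ (k + 1) * b' = b ^ k)
    (hc1 : b' * (a * a') = a') (hc2 : b' * b * a' = b') :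
    b' * (a + b) * a' = a' + b' ∧ b ^ k * (a * a') = b ^ k ∧ b' * b * a ^ k = a ^ k ∧ b * b' * (a * a') = b * b' ∧ b' * b * (a' * a) = a' * a := by
  have hba : b' * a = a' * a := mul_eq_mul_of_mul_mul_eq ha1 hc1
  refine ⟨?_, ?_, ?_, ?_, ?_⟩
  · rw [mul_add, add_mul, mul_assoc, hc1, hc2]
  · calc b ^ k * (a * a') = b ^ (k + 1) * (b' * (a * a')) := by rw [← hb2, mul_assoc]
      _ = b ^ k := by rw [hc1, pow_succ_mul_eq_pow_of_mul_mul_eq hb2 hc2]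
  · calc b' * b * a ^ k = b' * b * a' * a ^ (k + 1) := by rw [mul_assoc _ a', ha3]
      _ = a' * a * a ^ k := by rw [hc2, pow_succ', ← mul_assoc, hba]
      _ = a ^ k := by rw [mul_assoc, ← pow_succ', ha3]
  · rw [mul_assoc, hc1, mul_eq_mul_of_mul_mul_mul_eq hb1 hc2]
  · rw [← mul_assoc, hc2, hba]

theorem WD_absorption2 {R : Type*} [Ring R] (a b a' b' : R) (k : ℕ) (hk : 0 < k)
    (ha1 : a * a' * a = a) (ha2 : a ^ (k + 1) * a' = a ^ k) (ha3 : a' * a ^ (k + 1) = a ^ k)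
    (hb1 : b * b' * b = b) (hb2 : b ^ (k + 1) * b' = b ^ k) (hb3 : b' * b ^ (k + 1) = b ^ k)
    (hc1 : b' * (a * a') = a') (hc2 : b' * b * a' = b') :
    b' * (a + b) * a' = a' + b' ∧ b ^ k * (a * a') = b ^ k ∧ b' * b * a ^ k = a ^ k ∧ b * b' * (a * a') = b * b' ∧ b' * b * (a' * a) = a' * a :=
  WD_absorption2_general a b a' b' k ha1 ha3 hb1 hb2 hc1 hc2
end
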